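/- Let σ be a density matrix on ℂ²⊗ℂ²⊗ℂ^{d}⊗ℂ^{d'} (factors A,B,A',B') written as σ = Σ_{i,j,k,l∈{0,1}}|ij⟩⟨kl|⊗A_{ijkl}, and suppose 0 < ε < 1/8 and ‖A_{0011}‖₁ > 1/2 − ε. Then there exists a private bit γ on the same space such that ‖σ − γ‖₁ ≤ δ(ε), where δ(ε) = 2√(8√(2ε) + h(2√(2ε))) + 2√(2ε) and h(x) = −x log₂ x − (1−x) log₂(1−x) is the binary entropy function. -/

import Mathlib

set_option linter.unusedSectionVars false
set_option maxHeartbeats 1000000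


open Matrix Kronecker BigOperators
open scoped ComplexOrder Classical

/-- Total matrix square root: `PosSemidef.sqrt` on positive semidefinite matrices,
junk value `0` otherwise. -/
noncomputable def sqrtm {n : Type*} [Fintype n] [DecidableEq n] (M : Matrix n n ℂ) :
    Matrix n n ℂ :=
  if h : M.PosSemidef then
    h.1.eigenvectorUnitary.1 * diagonal ((↑) ∘ (√·) ∘ h.1.eigenvalues) *
      (star h.1.eigenvectorUnitary : Matrix n n ℂ)
  else 0

/-- The trace norm `‖X‖₁ = Tr √(X†X)`. -/
noncomputable def traceNorm {n : Type*} [Fintype n] [DecidableEq n] (X : Matrix n n ℂ) : ℝ :=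
  ((sqrtm (Xᴴ * X)).trace).re

/-- The block `A_{ijkl}` of a matrix on `(ℂ²⊗ℂ²)⊗(ℂ^d⊗ℂ^{d'})`. -/
def blk {dA dB : ℕ}
    (σ : Matrix ((Fin 2 × Fin 2) × (Fin dA × Fin dB)) ((Fin 2 × Fin 2) × (Fin dA × Fin dB)) ℂ)
    (p q : Fin 2 × Fin 2) : Matrix (Fin dA × Fin dB) (Fin dA × Fin dB) ℂ :=
  Matrix.of fun s t => σ (p, s) (q, t)

/-- A private bit (pbit): `γ = (1/2) Σ_{i,j∈{0,1}} |ii⟩⟨jj| ⊗ U_i τ U_j†`. -/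
noncomputable def pbit {dA dB : ℕ} (τ : Matrix (Fin dA × Fin dB) (Fin dA × Fin dB) ℂ)
    (U : Fin 2 → Matrix (Fin dA × Fin dB) (Fin dA × Fin dB) ℂ) :
    Matrix ((Fin 2 × Fin 2) × (Fin dA × Fin dB)) ((Fin 2 × Fin 2) × (Fin dA × Fin dB)) ℂ :=
  ∑ i : Fin 2, ∑ j : Fin 2, ((1 : ℂ) / 2) •
    (Matrix.single (i, i) (j, j) (1 : ℂ) ⊗ₖ (U i * τ * (U j)ᴴ))

/-- The binary entropy function `h(x) = −x log₂ x − (1−x) log₂(1−x)`. -/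
noncomputable def binEnt (x : ℝ) : ℝ :=
  -x * Real.logb 2 x - (1 - x) * Real.logb 2 (1 - x)


namespace PbitAux


variable {n : Type*} [Fintype n] [DecidableEq n]

open scoped MatrixOrder in
lemma sqrtm_of_psd {M : Matrix n n ℂ} (h : M.PosSemidef) : sqrtm M = CFC.sqrt M := by
  rw [CFC.sqrt_eq_cfc, cfc_nnreal_eq_real _ M h.nonneg, h.1.cfc_eq, sqrtm, dif_pos h]
  simp only [IsHermitian.cfc, Unitary.conjStarAlgAut_apply]
  congr 3
  ext i
  simp [h.eigenvalues_nonneg i]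

open scoped MatrixOrder in
lemma sqrtm_posSemidef {M : Matrix n n ℂ} (h : M.PosSemidef) : (sqrtm M).PosSemidef := by
  rw [sqrtm_of_psd h]; exact (CFC.sqrt_nonneg M).posSemidef

open scoped MatrixOrder in
lemma sqrtm_mul_self {M : Matrix n n ℂ} (h : M.PosSemidef) : sqrtm M * sqrtm M = M := by
  rw [sqrtm_of_psd h]; exact CFC.sqrt_mul_sqrt_self M h.nonneg

open scoped MatrixOrder in
lemma sqrtm_eq_of_sq {B M : Matrix n n ℂ} (hB : B.PosSemidef) (h : B * B = M) :
    sqrtm M = B := by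
  have hM : M.PosSemidef := by
    rw [← h]
    simpa [hB.isHermitian.eq] using Matrix.posSemidef_conjTranspose_mul_self B
  rw [sqrtm_of_psd hM]
  exact CFC.sqrt_unique h hB.nonneg

lemma re_star_dot_self_nonneg (z : n → ℂ) : 0 ≤ (star z ⬝ᵥ z).re := by
  simp only [dotProduct, Pi.star_apply, Complex.re_sum]
  refine Finset.sum_nonneg fun i _ => ?_
  rw [RCLike.star_def, Complex.conj_mul', ← Complex.ofReal_pow, Complex.ofReal_re]
  positivity

lemma abs_dotProduct_le (x y : n → ℂ) :
    ‖star x ⬝ᵥ y‖ ≤ Real.sqrt ((star x ⬝ᵥ x).re) * Real.sqrt ((star y ⬝ᵥ y).re) := by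
  have h := norm_inner_le_norm (𝕜 := ℂ)
    (WithLp.toLp 2 x) (WithLp.toLp 2 y)
  rw [EuclideanSpace.inner_toLp_toLp, dotProduct_comm] at h
  have hx : ‖WithLp.toLp 2 x‖ = Real.sqrt ((star x ⬝ᵥ x).re) := by
    rw [@norm_eq_sqrt_re_inner ℂ, EuclideanSpace.inner_toLp_toLp, dotProduct_comm]
    rfl
  have hy : ‖WithLp.toLp 2 y‖ = Real.sqrt ((star y ⬝ᵥ y).re) := by
    rw [@norm_eq_sqrt_re_inner ℂ, EuclideanSpace.inner_toLp_toLp, dotProduct_comm]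
    rfl
  rw [hx, hy] at h
  exact h

lemma mulVec_norm_sq (C : Matrix n n ℂ) (hC : C ∈ Matrix.unitaryGroup n ℂ) (z : n → ℂ) :
    star (C *ᵥ z) ⬝ᵥ (C *ᵥ z) = star z ⬝ᵥ z := by
  rw [star_mulVec, dotProduct_mulVec, vecMul_vecMul, ← Matrix.star_eq_conjTranspose,
    (Matrix.mem_unitaryGroup_iff').mp hC, vecMul_one]

lemma re_trace_unitary_mul_psd_le {C P : Matrix n n ℂ} (hC : C ∈ Matrix.unitaryGroup n ℂ)
    (hP : P.PosSemidef) : ((C * P).trace).re ≤ P.trace.re := by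
  obtain ⟨R, hRpsd, hRR⟩ : ∃ R : Matrix n n ℂ, R.PosSemidef ∧ R * R = P :=
    ⟨sqrtm P, sqrtm_posSemidef hP, sqrtm_mul_self hP⟩
  have hherm : ∀ u t, star (R u t) = R t u := by
    intro u t
    conv_rhs => rw [← hRpsd.1]
    rfl
  have key : (C * P).trace = ∑ t, star (fun u => R u t) ⬝ᵥ (C *ᵥ fun u => R u t) := by
    rw [← hRR, ← mul_assoc, trace_mul_comm]
    simp only [Matrix.trace, Matrix.diag, mul_apply, dotProduct, mulVec, Pi.star_apply]
    exact Finset.sum_congr rfl fun t _ => Finset.sum_congr rfl fun u _ => by rw [hherm u t]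
  have hPkey : P.trace = ∑ t, star (fun u => R u t) ⬝ᵥ (fun u => R u t) := by
    rw [← hRR]
    simp only [Matrix.trace, Matrix.diag, mul_apply, dotProduct, Pi.star_apply]
    exact Finset.sum_congr rfl fun t _ => Finset.sum_congr rfl fun u _ => by rw [hherm u t]
  rw [key, hPkey, Complex.re_sum, Complex.re_sum]
  refine Finset.sum_le_sum fun t _ => ?_
  calc (star (fun u => R u t) ⬝ᵥ (C *ᵥ fun u => R u t)).re
      ≤ ‖star (fun u => R u t) ⬝ᵥ (C *ᵥ fun u => R u t)‖ := Complex.re_le_norm _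
    _ ≤ Real.sqrt ((star (fun u => R u t) ⬝ᵥ (fun u => R u t)).re) *
        Real.sqrt ((star (C *ᵥ fun u => R u t) ⬝ᵥ (C *ᵥ fun u => R u t)).re) :=
        abs_dotProduct_le _ _
    _ = (star (fun u => R u t) ⬝ᵥ (fun u => R u t)).re := by
        rw [mulVec_norm_sq C hC, Real.mul_self_sqrt (re_star_dot_self_nonneg _)]

lemma exists_polar (X : Matrix n n ℂ) :
    ∃ W ∈ Matrix.unitaryGroup n ℂ, X = W * sqrtm (Xᴴ * X) := by
  have hPSD : (Xᴴ * X).PosSemidef := Matrix.posSemidef_conjTranspose_mul_self X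
  have hH : (Xᴴ * X).IsHermitian := hPSD.1
  set lam := hH.eigenvalues with hlamdef
  have hlamnn : ∀ i, 0 ≤ lam i := hPSD.eigenvalues_nonneg
  set u := hH.eigenvectorBasis with hudef
  set U : Matrix n n ℂ := (hH.eigenvectorUnitary : Matrix n n ℂ) with hUdef
  have hUmem : U ∈ Matrix.unitaryGroup n ℂ := hH.eigenvectorUnitary.2
  have hUapp : ∀ i j, U i j = ⇑(u j) i := fun i j => rfl
  -- orthonormality of eigenvectors as dot products
  have horth : ∀ i j, star ⇑(u i) ⬝ᵥ ⇑(u j) = if i = j then (1 : ℂ) else 0 := by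
    intro i j
    have h := (orthonormal_iff_ite (𝕜 := ℂ)).mp u.orthonormal i j
    rwa [EuclideanSpace.inner_eq_star_dotProduct, dotProduct_comm] at h
  have hXu : ∀ i j, star (X *ᵥ ⇑(u i)) ⬝ᵥ (X *ᵥ ⇑(u j))
      = (lam j : ℂ) * (if i = j then 1 else 0) := by
    intro i j
    rw [star_mulVec, dotProduct_mulVec, vecMul_vecMul, ← dotProduct_mulVec,
      hH.mulVec_eigenvectorBasis]
    rw [show ((lam j : ℝ) • ⇑(u j) : n → ℂ) = (lam j : ℂ) • ⇑(u j) by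
      ext k; simp [Complex.real_smul]]
    rw [dotProduct_smul, horth i j]
    simp
  -- the partial isometry columns
  set v : n → EuclideanSpace ℂ n := fun j =>
    ((Real.sqrt (lam j) : ℂ))⁻¹ • (WithLp.equiv 2 (n → ℂ)).symm (X *ᵥ ⇑(u j)) with hvdef
  have hvon : Orthonormal ℂ (({j | lam j ≠ 0} : Set n).restrict v) := by
    rw [orthonormal_iff_ite]
    rintro ⟨i, hi⟩ ⟨j, hj⟩
    change inner ℂ (v i) (v j) = _
    rw [hvdef]
    simp only [inner_smul_left, inner_smul_right]
    rw [show (inner ℂ ((WithLp.equiv 2 (n → ℂ)).symm (X *ᵥ ⇑(u i)))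
        ((WithLp.equiv 2 (n → ℂ)).symm (X *ᵥ ⇑(u j))) : ℂ)
      = star (X *ᵥ ⇑(u i)) ⬝ᵥ (X *ᵥ ⇑(u j)) from by
        rw [EuclideanSpace.inner_eq_star_dotProduct, dotProduct_comm]; rfl]
    rw [hXu i j]
    by_cases hij : i = j
    · subst hij
      simp only [Subtype.mk_eq_mk, if_pos rfl, mul_one, map_inv₀, Complex.conj_ofReal]
      have hlC : (lam i : ℂ) ≠ 0 := by
        simpa [Complex.ofReal_eq_zero] using hi
      have hsC : (Real.sqrt (lam i) : ℂ) ≠ 0 := by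
        simp only [ne_eq, Complex.ofReal_eq_zero]
        intro h
        exact hi ((Real.sqrt_eq_zero (hlamnn i)).mp h)
      field_simp
      rw [← Complex.ofReal_pow, Real.sq_sqrt (hlamnn i)]
    · rw [if_neg hij, if_neg (by simpa [Subtype.mk_eq_mk] using hij)]
      simp
  obtain ⟨b, hb⟩ := hvon.exists_orthonormalBasis_extension_of_card_eq
    (finrank_euclideanSpace (𝕜 := ℂ) (ι := n))
  set B : Matrix n n ℂ := (EuclideanSpace.basisFun n ℂ).toBasis.toMatrix b.toBasis with hBdef
  have hBmem : B ∈ Matrix.unitaryGroup n ℂ :=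
    (EuclideanSpace.basisFun n ℂ).toMatrix_orthonormalBasis_mem_unitary b
  have hBapp : ∀ i j, B i j = ⇑(b j) i := fun i j => rfl
  -- the square root
  set D : Matrix n n ℂ := diagonal fun j => (Real.sqrt (lam j) : ℂ) with hDdef
  have hDpsd : D.PosSemidef := by
    rw [hDdef]
    refine posSemidef_diagonal_iff.mpr fun j => ?_
    rw [Complex.zero_le_real]
    positivity
  have hRpsd : (U * D * Uᴴ).PosSemidef := hDpsd.mul_mul_conjTranspose_same U
  have hUU : Uᴴ * U = 1 := by
    rw [← Matrix.star_eq_conjTranspose]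
    exact (Matrix.mem_unitaryGroup_iff').mp hUmem
  have hUU' : U * Uᴴ = 1 := by
    rw [← Matrix.star_eq_conjTranspose]
    exact (Matrix.mem_unitaryGroup_iff).mp hUmem
  have hRsq : (U * D * Uᴴ) * (U * D * Uᴴ) = Xᴴ * X := by
    have : U * D * Uᴴ * (U * D * Uᴴ) = U * (D * D) * Uᴴ := by
      rw [show U * D * Uᴴ * (U * D * Uᴴ) = U * D * (Uᴴ * U) * D * Uᴴ by
        noncomm_ring]
      rw [hUU, mul_one, mul_assoc U D D, ← mul_assoc]
    rw [this, hDdef, diagonal_mul_diagonal]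
    have hdd : (fun j => (Real.sqrt (lam j) : ℂ) * (Real.sqrt (lam j) : ℂ))
        = fun j => ((lam j : ℝ) : ℂ) := funext fun j => by
      rw [← Complex.ofReal_mul, Real.mul_self_sqrt (hlamnn j)]
    rw [hdd]
    conv_rhs => rw [hH.spectral_theorem]
    rw [Unitary.conjStarAlgAut_apply, Matrix.star_eq_conjTranspose]
    rfl
  have hsq : sqrtm (Xᴴ * X) = U * D * Uᴴ := sqrtm_eq_of_sq hRpsd hRsq
  refine ⟨B * Uᴴ, ?_, ?_⟩
  · exact mul_mem hBmem (by rw [← Matrix.star_eq_conjTranspose]; exact Unitary.star_mem hUmem)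
  · rw [hsq, show B * Uᴴ * (U * D * Uᴴ) = B * (Uᴴ * U) * D * Uᴴ by noncomm_ring,
      hUU, mul_one]
    -- suffices : X * U = B * D
    have hXU : X * U = B * D := by
      ext k j
      rw [hDdef, mul_diagonal]
      have hlhs : (X * U) k j = (X *ᵥ ⇑(u j)) k := by
        simp only [mul_apply, mulVec, dotProduct]
        exact Finset.sum_congr rfl fun l _ => by rw [hUapp l j]
      rw [hlhs, hBapp k j]
      by_cases hj : lam j ≠ 0
      · rw [hb j hj, hvdef]
        have hsC : (Real.sqrt (lam j) : ℂ) ≠ 0 := by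
          simp only [ne_eq, Complex.ofReal_eq_zero]
          intro h
          exact hj ((Real.sqrt_eq_zero (hlamnn j)).mp h)
        have hrfl : (WithLp.equiv 2 (n → ℂ))
            (((Real.sqrt (lam j) : ℂ))⁻¹ • (WithLp.equiv 2 (n → ℂ)).symm (X *ᵥ ⇑(u j))) k
            = ((Real.sqrt (lam j) : ℂ))⁻¹ * (X *ᵥ ⇑(u j)) k := rfl
        change _ = ((Real.sqrt (lam j) : ℂ))⁻¹ * (X *ᵥ ⇑(u j)) k * _
        field_simp
      · push_neg at hj
        have h0 : (X *ᵥ ⇑(u j)) = 0 := by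
          have := hXu j j
          rw [if_pos rfl, mul_one, hj] at this
          simpa using dotProduct_star_self_eq_zero.mp (by
            rw [this]; simp)
        rw [h0, hj]
        simp
    calc X = X * (U * Uᴴ) := by rw [hUU', mul_one]
    _ = (X * U) * Uᴴ := by rw [mul_assoc]
    _ = B * D * Uᴴ := by rw [hXU]



lemma psd_trace_real {P : Matrix n n ℂ} (hP : P.PosSemidef) :
    P.trace = (P.trace.re : ℂ) := by
  have h := Matrix.trace_conjTranspose P
  rw [hP.1] at h
  have : (starRingEnd ℂ) P.trace = P.trace := by
    conv_rhs => rw [h]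
    rfl
  exact ((Complex.conj_eq_iff_re).mp this).symm

lemma psd_diag_re_nonneg {P : Matrix n n ℂ} (hP : P.PosSemidef) (t : n) :
    0 ≤ (P t t).re := by
  obtain ⟨R, hRpsd, hRR⟩ : ∃ R : Matrix n n ℂ, R.PosSemidef ∧ R * R = P :=
    ⟨sqrtm P, sqrtm_posSemidef hP, sqrtm_mul_self hP⟩
  have hherm : ∀ u t, star (R u t) = R t u := by
    intro u t
    conv_rhs => rw [← hRpsd.1]
    rfl
  have : P t t = star (fun u => R u t) ⬝ᵥ (fun u => R u t) := by
    rw [← hRR]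
    simp only [mul_apply, dotProduct, Pi.star_apply]
    exact Finset.sum_congr rfl fun u _ => by rw [hherm u t]
  rw [this]
  exact re_star_dot_self_nonneg _

lemma psd_trace_re_nonneg {P : Matrix n n ℂ} (hP : P.PosSemidef) : 0 ≤ P.trace.re := by
  have : P.trace.re = ∑ t, (P t t).re := by
    simp [Matrix.trace, Matrix.diag, Complex.re_sum]
  rw [this]
  exact Finset.sum_nonneg fun t _ => psd_diag_re_nonneg hP t

lemma traceNorm_psd {P : Matrix n n ℂ} (hP : P.PosSemidef) : traceNorm P = P.trace.re := by
  unfold traceNorm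
  rw [hP.1, sqrtm_eq_of_sq hP rfl]

lemma traceNorm_nonneg (X : Matrix n n ℂ) : 0 ≤ traceNorm X :=
  psd_trace_re_nonneg (sqrtm_posSemidef (Matrix.posSemidef_conjTranspose_mul_self X))

lemma re_trace_mul_le {C : Matrix n n ℂ} (hC : C ∈ Matrix.unitaryGroup n ℂ)
    (X : Matrix n n ℂ) : ((C * X).trace).re ≤ traceNorm X := by
  obtain ⟨W, hW, hXW⟩ := exists_polar X
  have hP := sqrtm_posSemidef (Matrix.posSemidef_conjTranspose_mul_self X)
  have h1 : C * X = (C * W) * sqrtm (Xᴴ * X) := by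
    conv_lhs => rw [hXW]
    rw [mul_assoc]
  rw [h1]
  exact re_trace_unitary_mul_psd_le (mul_mem hC hW) hP

lemma unitary_conjTranspose_mem {W : Matrix n n ℂ} (hW : W ∈ Matrix.unitaryGroup n ℂ) :
    Wᴴ ∈ Matrix.unitaryGroup n ℂ := by
  rw [← Matrix.star_eq_conjTranspose]
  exact Unitary.star_mem hW

lemma traceNorm_eq_re_trace (X : Matrix n n ℂ) :
    ∃ W ∈ Matrix.unitaryGroup n ℂ, traceNorm X = ((Wᴴ * X).trace).re ∧
      X = W * sqrtm (Xᴴ * X) := by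
  obtain ⟨W, hW, hXW⟩ := exists_polar X
  refine ⟨W, hW, ?_, hXW⟩
  have h1 : Wᴴ * X = sqrtm (Xᴴ * X) := by
    conv_lhs => rw [hXW]
    rw [← mul_assoc, ← Matrix.star_eq_conjTranspose,
      (Matrix.mem_unitaryGroup_iff').mp hW, one_mul]
  rw [h1]
  rfl

lemma traceNorm_triangle (X Y : Matrix n n ℂ) :
    traceNorm (X + Y) ≤ traceNorm X + traceNorm Y := by
  obtain ⟨W, hW, hkey, _⟩ := traceNorm_eq_re_trace (X + Y)
  rw [hkey, Matrix.mul_add, Matrix.trace_add, Complex.add_re]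
  exact add_le_add (re_trace_mul_le (unitary_conjTranspose_mem hW) X)
    (re_trace_mul_le (unitary_conjTranspose_mem hW) Y)

lemma traceNorm_zero : traceNorm (0 : Matrix n n ℂ) = 0 := by
  unfold traceNorm
  rw [Matrix.mul_zero, sqrtm_eq_of_sq Matrix.PosSemidef.zero (by rw [mul_zero])]
  simp

lemma traceNorm_sum_le {ι : Type*} (s : Finset ι) (f : ι → Matrix n n ℂ) :
    traceNorm (∑ i ∈ s, f i) ≤ ∑ i ∈ s, traceNorm (f i) := by
  classical
  induction s using Finset.induction_on with
  | empty => simp [traceNorm_zero]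
  | insert a s' hx ih =>
    rw [Finset.sum_insert hx, Finset.sum_insert hx]
    exact le_trans (traceNorm_triangle _ _) (by linarith [ih])

lemma psd_smul {P : Matrix n n ℂ} (hP : P.PosSemidef) {r : ℝ} (hr : 0 ≤ r) :
    (((r : ℂ)) • P).PosSemidef := by
  constructor
  · unfold Matrix.IsHermitian
    rw [conjTranspose_smul, hP.1.eq, Complex.star_def, Complex.conj_ofReal]
  · exact (hP.smul (Complex.zero_le_real.mpr hr)).2

lemma traceNorm_smul (c : ℂ) (X : Matrix n n ℂ) :
    traceNorm (c • X) = ‖c‖ * traceNorm X := by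
  have habs : (starRingEnd ℂ) c * c = ((‖c‖ ^ 2 : ℝ) : ℂ) := by
    rw [Complex.conj_mul']
    norm_num
  have h1 : (c • X)ᴴ * (c • X) = ((‖c‖ ^ 2 : ℝ) : ℂ) • (Xᴴ * X) := by
    rw [conjTranspose_smul, smul_mul_assoc, mul_smul_comm, smul_smul, Complex.star_def, habs]
  have hXX := Matrix.posSemidef_conjTranspose_mul_self X
  have hsq : sqrtm (((‖c‖ ^ 2 : ℝ) : ℂ) • (Xᴴ * X)) = ((‖c‖ : ℝ) : ℂ) • sqrtm (Xᴴ * X) := by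
    refine sqrtm_eq_of_sq (psd_smul (sqrtm_posSemidef hXX) (norm_nonneg c)) ?_
    rw [smul_mul_assoc, mul_smul_comm, smul_smul, sqrtm_mul_self hXX, ← Complex.ofReal_mul,
      ← pow_two]
  unfold traceNorm
  rw [h1, hsq, Matrix.trace_smul, smul_eq_mul, Complex.re_ofReal_mul]

lemma traceNorm_conjTranspose (X : Matrix n n ℂ) : traceNorm Xᴴ = traceNorm X := by
  obtain ⟨W, hW, _, hXW⟩ := traceNorm_eq_re_trace X
  have hP := sqrtm_posSemidef (Matrix.posSemidef_conjTranspose_mul_self X)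
  set R := sqrtm (Xᴴ * X) with hR
  have hXc : Xᴴ = R * Wᴴ := by
    rw [hXW, conjTranspose_mul, hP.1.eq]
  have hWW : W * Wᴴ = 1 := by
    rw [← Matrix.star_eq_conjTranspose]
    exact (Matrix.mem_unitaryGroup_iff).mp hW
  have hWW' : Wᴴ * W = 1 := by
    rw [← Matrix.star_eq_conjTranspose]
    exact (Matrix.mem_unitaryGroup_iff').mp hW
  have hsq1 : Xᴴᴴ * Xᴴ = (W * R * Wᴴ) * (W * R * Wᴴ) := by
    rw [conjTranspose_conjTranspose, hXc, hXW]
    calc W * R * (R * Wᴴ) = W * R * (Wᴴ * W) * (R * Wᴴ) := by rw [hWW', mul_one]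
    _ = W * R * Wᴴ * (W * R * Wᴴ) := by noncomm_ring
  have hpsd2 : (W * R * Wᴴ).PosSemidef := hP.mul_mul_conjTranspose_same W
  unfold traceNorm
  rw [hsq1, sqrtm_eq_of_sq hpsd2 rfl, Matrix.trace_mul_cycle, hWW', one_mul]

section Frob
variable {m' : Type*} [Fintype m']

noncomputable def frobSq (M : Matrix n m' ℂ) : ℝ := ((M * Mᴴ).trace).re

lemma dot_self_re {κ : Type*} [Fintype κ] (z : κ → ℂ) :
    (star z ⬝ᵥ z).re = ∑ k, Complex.normSq (z k) := by
  simp only [dotProduct, Pi.star_apply, Complex.re_sum]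
  refine Finset.sum_congr rfl fun k _ => ?_
  rw [RCLike.star_def, Complex.conj_mul']
  rw [← Complex.ofReal_pow, Complex.ofReal_re, Complex.sq_norm]

lemma frobSq_eq_sum (M : Matrix n m' ℂ) :
    frobSq M = ∑ i, ∑ j, Complex.normSq (M i j) := by
  have h : (M * Mᴴ).trace = ∑ i, ∑ j, (Complex.normSq (M i j) : ℂ) := by
    simp only [Matrix.trace, Matrix.diag, mul_apply, conjTranspose_apply]
    refine Finset.sum_congr rfl fun i _ => Finset.sum_congr rfl fun j _ => ?_
    rw [RCLike.star_def, Complex.mul_conj]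
  unfold frobSq
  rw [h]
  simp [Complex.re_sum]

lemma frobSq_nonneg (M : Matrix n m' ℂ) : 0 ≤ frobSq M := by
  rw [frobSq_eq_sum]
  refine Finset.sum_nonneg fun i _ => Finset.sum_nonneg fun j _ => Complex.normSq_nonneg _

lemma frobSq_unitary_mul {W : Matrix n n ℂ} (hW : W ∈ Matrix.unitaryGroup n ℂ)
    (M : Matrix n m' ℂ) : frobSq (W * M) = frobSq M := by
  unfold frobSq
  rw [conjTranspose_mul]
  have h : W * M * (Mᴴ * Wᴴ) = W * (M * Mᴴ) * Wᴴ := by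
    simp only [Matrix.mul_assoc]
  rw [h, Matrix.trace_mul_cycle]
  rw [show Wᴴ * W = 1 by
    rw [← Matrix.star_eq_conjTranspose]; exact (Matrix.mem_unitaryGroup_iff').mp hW, one_mul]

lemma trace_mul_conjTranspose_eq_dot (A N : Matrix n m' ℂ) :
    (A * Nᴴ).trace = star (fun p : n × m' => N p.1 p.2) ⬝ᵥ (fun p : n × m' => A p.1 p.2) := by
  simp only [Matrix.trace, Matrix.diag, mul_apply, conjTranspose_apply, dotProduct,
    Pi.star_apply, Fintype.sum_prod_type]
  exact Finset.sum_congr rfl fun i _ => Finset.sum_congr rfl fun j _ => mul_comm _ _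

lemma abs_re_trace_mul_conjTranspose_le (A N : Matrix n m' ℂ) :
    ((A * Nᴴ).trace).re ≤ Real.sqrt (frobSq A) * Real.sqrt (frobSq N) := by
  rw [trace_mul_conjTranspose_eq_dot]
  calc (star (fun p : n × m' => N p.1 p.2) ⬝ᵥ (fun p : n × m' => A p.1 p.2)).re
      ≤ ‖_‖ := Complex.re_le_norm _
    _ ≤ Real.sqrt ((star (fun p : n × m' => N p.1 p.2) ⬝ᵥ (fun p : n × m' => N p.1 p.2)).re) *
        Real.sqrt ((star (fun p : n × m' => A p.1 p.2) ⬝ᵥ (fun p : n × m' => A p.1 p.2)).re) :=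
      abs_dotProduct_le _ _
    _ = Real.sqrt (frobSq N) * Real.sqrt (frobSq A) := by
        rw [dot_self_re, dot_self_re, frobSq_eq_sum, frobSq_eq_sum]
        simp only [Fintype.sum_prod_type]
    _ = Real.sqrt (frobSq A) * Real.sqrt (frobSq N) := mul_comm _ _

lemma traceNorm_mul_conjTranspose_le (M N : Matrix n m' ℂ) :
    traceNorm (M * Nᴴ) ≤ Real.sqrt (frobSq M) * Real.sqrt (frobSq N) := by
  obtain ⟨W, hW, hkey, _⟩ := traceNorm_eq_re_trace (M * Nᴴ)
  rw [hkey, ← Matrix.mul_assoc]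
  calc ((Wᴴ * M * Nᴴ).trace).re
      ≤ Real.sqrt (frobSq (Wᴴ * M)) * Real.sqrt (frobSq N) :=
        abs_re_trace_mul_conjTranspose_le _ _
    _ = Real.sqrt (frobSq M) * Real.sqrt (frobSq N) := by
        rw [frobSq_unitary_mul (unitary_conjTranspose_mem hW)]

lemma frobSq_sub (M N : Matrix n m' ℂ) :
    frobSq (M - N) = frobSq M + frobSq N - 2 * ((M * Nᴴ).trace).re := by
  have hNM : ((N * Mᴴ).trace).re = ((M * Nᴴ).trace).re := by
    have h := Matrix.trace_conjTranspose (M * Nᴴ)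
    rw [conjTranspose_mul, conjTranspose_conjTranspose] at h
    rw [h]
    exact Complex.conj_re _
  unfold frobSq
  rw [conjTranspose_sub, Matrix.sub_mul, Matrix.mul_sub, Matrix.mul_sub,
    Matrix.trace_sub, Matrix.trace_sub, Matrix.trace_sub, Complex.sub_re,
    Complex.sub_re, Complex.sub_re]
  have := hNM
  linarith

end Frob

section Kron
variable {m : Type*} [Fintype m] [DecidableEq m]

lemma kron_conjTranspose (A : Matrix m m ℂ) (B : Matrix n n ℂ) :
    (A ⊗ₖ B)ᴴ = Aᴴ ⊗ₖ Bᴴ := by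
  ext ⟨i, j⟩ ⟨k, l⟩
  simp [conjTranspose_apply, Matrix.kroneckerMap_apply, star_mul']

lemma stdBasis_conjTranspose (p q : m) :
    (Matrix.single p q (1 : ℂ))ᴴ = Matrix.single q p (1 : ℂ) := by
  ext i j
  simp [conjTranspose_apply, Matrix.single, and_comm]

lemma psd_one_kron {M : Matrix n n ℂ} (hM : M.PosSemidef) :
    ((1 : Matrix m m ℂ) ⊗ₖ M).PosSemidef := by
  exact Matrix.PosSemidef.one.kronecker hM

lemma psd_stdBasis_kron (q : m) {M : Matrix n n ℂ} (hM : M.PosSemidef) :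
    ((Matrix.single q q (1 : ℂ)) ⊗ₖ M).PosSemidef := by
  have h1 : (Matrix.single q q (1 : ℂ)) ⊗ₖ M
      = ((Matrix.single q q (1 : ℂ)) ⊗ₖ (1 : Matrix n n ℂ)) *
        ((1 : Matrix m m ℂ) ⊗ₖ M) *
        ((Matrix.single q q (1 : ℂ)) ⊗ₖ (1 : Matrix n n ℂ))ᴴ := by
    rw [kron_conjTranspose, conjTranspose_one, stdBasis_conjTranspose,
      ← Matrix.mul_kronecker_mul, ← Matrix.mul_kronecker_mul]
    simp [Matrix.single_mul_single_same]
  rw [h1]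
  exact (psd_one_kron hM).mul_mul_conjTranspose_same _

lemma trace_stdBasis (q : m) : (Matrix.single q q (1 : ℂ)).trace = 1 := by
  simp [Matrix.trace, Matrix.diag, Matrix.single, Finset.sum_ite_eq]

lemma sqrtm_stdBasis_kron (q : m) {M : Matrix n n ℂ} (hM : M.PosSemidef) :
    sqrtm ((Matrix.single q q (1 : ℂ)) ⊗ₖ M)
      = (Matrix.single q q (1 : ℂ)) ⊗ₖ sqrtm M := by
  refine sqrtm_eq_of_sq (psd_stdBasis_kron q (sqrtm_posSemidef hM)) ?_
  rw [← Matrix.mul_kronecker_mul, sqrtm_mul_self hM, Matrix.single_mul_single_same]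
  simp

lemma traceNorm_kron_stdBasis (p q : m) (N : Matrix n n ℂ) :
    traceNorm ((Matrix.single p q (1 : ℂ)) ⊗ₖ N) = traceNorm N := by
  unfold traceNorm
  rw [kron_conjTranspose, stdBasis_conjTranspose, ← Matrix.mul_kronecker_mul,
    Matrix.single_mul_single_same, one_mul,
    sqrtm_stdBasis_kron q (Matrix.posSemidef_conjTranspose_mul_self N),
    Matrix.trace_kronecker, trace_stdBasis, one_mul]

end Kron

lemma blk_sub {dA dB : ℕ}
    (M N : Matrix ((Fin 2 × Fin 2) × (Fin dA × Fin dB)) ((Fin 2 × Fin 2) × (Fin dA × Fin dB)) ℂ)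
    (p q : Fin 2 × Fin 2) : blk (M - N) p q = blk M p q - blk N p q := rfl

lemma blk_decomp {dA dB : ℕ}
    (M : Matrix ((Fin 2 × Fin 2) × (Fin dA × Fin dB)) ((Fin 2 × Fin 2) × (Fin dA × Fin dB)) ℂ) :
    M = ∑ p : Fin 2 × Fin 2, ∑ q : Fin 2 × Fin 2,
      (Matrix.single p q (1 : ℂ)) ⊗ₖ blk M p q := by
  ext ⟨p, s⟩ ⟨q, t⟩
  simp only [Matrix.sum_apply, Matrix.kroneckerMap_apply, blk, Matrix.of_apply,
    Matrix.single, ite_mul, one_mul, zero_mul, ite_and]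
  simp [Finset.sum_ite_eq, Finset.sum_ite_eq']

lemma blk_pbit {dA dB : ℕ} (τ : Matrix (Fin dA × Fin dB) (Fin dA × Fin dB) ℂ)
    (U : Fin 2 → Matrix (Fin dA × Fin dB) (Fin dA × Fin dB) ℂ) (p q : Fin 2 × Fin 2) :
    blk (pbit τ U) p q =
      if p.1 = p.2 ∧ q.1 = q.2 then ((1 : ℂ) / 2) • (U p.1 * τ * (U q.1)ᴴ) else 0 := by
  rcases p with ⟨p1, p2⟩
  rcases q with ⟨q1, q2⟩
  ext s t
  fin_cases p1 <;> fin_cases p2 <;> fin_cases q1 <;> fin_cases q2 <;>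
    simp [pbit, blk, Matrix.sum_apply, Matrix.single, Fin.sum_univ_two,
      Prod.ext_iff]


lemma binEnt_nonneg {x : ℝ} (h0 : 0 ≤ x) (h1 : x ≤ 1) : 0 ≤ binEnt x := by
  unfold binEnt
  have l1 : Real.logb 2 x ≤ 0 := Real.logb_nonpos (by norm_num) h0 h1
  have l2 : Real.logb 2 (1 - x) ≤ 0 := Real.logb_nonpos (by norm_num) (by linarith) (by linarith)
  nlinarith [mul_nonneg h0 (neg_nonneg.mpr l1), mul_nonneg (by linarith : (0:ℝ) ≤ 1 - x)
    (neg_nonneg.mpr l2)]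

lemma sum_prod_expand (f : Fin 2 × Fin 2 → Fin 2 × Fin 2 → ℝ) :
    (∑ p : Fin 2 × Fin 2, ∑ q : Fin 2 × Fin 2, f p q)
      = f (0,0) (0,0) + f (0,0) (0,1) + f (0,0) (1,0) + f (0,0) (1,1)
      + f (0,1) (0,0) + f (0,1) (0,1) + f (0,1) (1,0) + f (0,1) (1,1)
      + f (1,0) (0,0) + f (1,0) (0,1) + f (1,0) (1,0) + f (1,0) (1,1)
      + f (1,1) (0,0) + f (1,1) (0,1) + f (1,1) (1,0) + f (1,1) (1,1) := by
  rw [Fintype.sum_prod_type]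
  simp only [Fin.sum_univ_two, Fintype.sum_prod_type]
  ring

end PbitAux

set_option synthInstance.maxHeartbeats 400000 in
open PbitAux in
/-- if the upper-right block of a density matrix `σ` on
`ℂ²⊗ℂ²⊗ℂ^d⊗ℂ^{d'}` satisfies `‖A_{0011}‖₁ > 1/2 − ε` with `0 < ε < 1/8`, then `σ` is
`δ(ε)`-close in trace norm to some pbit, where
`δ(ε) = 2√(8√(2ε) + h(2√(2ε))) + 2√(2ε)`. -/
theorem block_norm_implies_close_to_pbit {dA dB : ℕ}
    (σ : Matrix ((Fin 2 × Fin 2) × (Fin dA × Fin dB)) ((Fin 2 × Fin 2) × (Fin dA × Fin dB)) ℂ)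
    (hσ : σ.PosSemidef) (hσtr : σ.trace = 1)
    (ε : ℝ) (hε0 : 0 < ε) (hε1 : ε < 1 / 8)
    (hblk : 1 / 2 - ε <
      traceNorm (blk σ ((0 : Fin 2), (0 : Fin 2)) ((1 : Fin 2), (1 : Fin 2)))) :
    ∃ (τ : Matrix (Fin dA × Fin dB) (Fin dA × Fin dB) ℂ)
      (U : Fin 2 → Matrix (Fin dA × Fin dB) (Fin dA × Fin dB) ℂ),
      τ.PosSemidef ∧ τ.trace = 1 ∧
      (∀ i, U i ∈ Matrix.unitaryGroup (Fin dA × Fin dB) ℂ) ∧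
      traceNorm (σ - pbit τ U) ≤
        2 * Real.sqrt (8 * Real.sqrt (2 * ε) + binEnt (2 * Real.sqrt (2 * ε))) +
          2 * Real.sqrt (2 * ε) := by

  classical
  -- the square-root rows of σ
  have hSpsd := sqrtm_posSemidef hσ
  have hSS : sqrtm σ * (sqrtm σ)ᴴ = σ := by
    rw [hSpsd.1.eq]; exact sqrtm_mul_self hσ
  set S : Fin 2 × Fin 2 → Matrix (Fin dA × Fin dB) ((Fin 2 × Fin 2) × (Fin dA × Fin dB)) ℂ :=
    fun p => Matrix.of (fun s r => sqrtm σ (p, s) r) with hSdef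
  have hblkS : ∀ p q, blk σ p q = S p * (S q)ᴴ := by
    intro p q
    ext s r
    rw [← hSS]
    simp [blk, Matrix.mul_apply, Matrix.conjTranspose_apply, hSdef]
  -- the diagonal block traces
  set a : Fin 2 × Fin 2 → ℝ := fun p => ((blk σ p p).trace).re with hadef
  have ha_frob : ∀ p, frobSq (S p) = a p := by
    intro p
    rw [hadef]
    simp only
    rw [hblkS p p]
    rfl
  have ha_nonneg : ∀ p, 0 ≤ a p := fun p => (ha_frob p) ▸ frobSq_nonneg (S p)
  have hsum_a : a (0,0) + a (0,1) + a (1,0) + a (1,1) = 1 := by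
    have h1 : σ.trace = ∑ p : Fin 2 × Fin 2, (blk σ p p).trace := by
      rw [Matrix.trace, Fintype.sum_prod_type]
      simp [Matrix.trace, Matrix.diag, blk]
    have h2 := congrArg Complex.re (h1.symm.trans hσtr)
    rw [Complex.re_sum] at h2
    simp only [Fintype.sum_prod_type, Fin.sum_univ_two] at h2
    simp only [hadef]
    rw [show (1 : ℂ).re = 1 from rfl] at h2
    linarith [h2.le, h2.ge]
  -- the off-diagonal block and its polar decomposition
  set X := blk σ ((0 : Fin 2), (0 : Fin 2)) ((1 : Fin 2), (1 : Fin 2)) with hXdef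
  set t := traceNorm X with htdef
  obtain ⟨W, hW, htr, hXpolar⟩ := traceNorm_eq_re_trace X
  set P := sqrtm (Xᴴ * X) with hPdef
  have hPpsd : P.PosSemidef := sqrtm_posSemidef (Matrix.posSemidef_conjTranspose_mul_self X)
  have hWW' : Wᴴ * W = 1 := by
    rw [← Matrix.star_eq_conjTranspose]; exact (Matrix.mem_unitaryGroup_iff').mp hW
  have hWWr : W * Wᴴ = 1 := by
    rw [← Matrix.star_eq_conjTranspose]; exact (Matrix.mem_unitaryGroup_iff).mp hW
  have hP_eq : Wᴴ * X = P := by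
    conv_lhs => rw [hXpolar]
    rw [← Matrix.mul_assoc, hWW', one_mul]
  have htre : (P.trace).re = t := by rw [← hP_eq]; exact htr.symm
  have htP : P.trace = (t : ℂ) := by rw [psd_trace_real hPpsd, htre]
  have ht0 : 0 < t := by
    have : (1:ℝ)/2 - ε < t := hblk
    linarith
  -- the square roots of the diagonal traces
  set α := Real.sqrt (a (0,0)) with hαdef
  set β := Real.sqrt (a (1,1)) with hβdef
  set g := Real.sqrt (a (0,1)) with hgdef
  set d := Real.sqrt (a (1,0)) with hddef
  have hα2 : α^2 = a (0,0) := Real.sq_sqrt (ha_nonneg _)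
  have hβ2 : β^2 = a (1,1) := Real.sq_sqrt (ha_nonneg _)
  have hg2 : g^2 = a (0,1) := Real.sq_sqrt (ha_nonneg _)
  have hd2 : d^2 = a (1,0) := Real.sq_sqrt (ha_nonneg _)
  have hα0 : 0 ≤ α := Real.sqrt_nonneg _
  have hβ0 : 0 ≤ β := Real.sqrt_nonneg _
  have hg0 : 0 ≤ g := Real.sqrt_nonneg _
  have hd0 : 0 ≤ d := Real.sqrt_nonneg _
  have hXSS : X = S (0,0) * (S (1,1))ᴴ := hblkS _ _
  have htαβ : t ≤ α * β := by
    rw [htdef, hXSS, hαdef, hβdef, ← ha_frob, ← ha_frob]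
    exact traceNorm_mul_conjTranspose_le _ _
  have hsq_sum : α^2 + g^2 + d^2 + β^2 = 1 := by
    rw [hα2, hβ2, hg2, hd2]; linarith [hsum_a]
  have hthalf : t ≤ 1/2 := by nlinarith only [sq_nonneg (α - β), sq_nonneg g, sq_nonneg d, htαβ, hsq_sum]
  have ht38 : 3/8 < t := by linarith
  -- G and the Frobenius estimates
  set G := Wᴴ * S (0,0) with hGdef
  have hPGS : P = G * (S ((1,1)))ᴴ := by
    rw [← hP_eq, hXSS, hGdef, Matrix.mul_assoc]
  have hfrobG : frobSq G = a (0,0) := by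
    rw [hGdef, frobSq_unitary_mul (unitary_conjTranspose_mem hW), ha_frob]
  have htGS : ((G * (S (1,1))ᴴ).trace).re = t := by rw [← hPGS]; exact htre
  have htSG : ((S (1,1) * Gᴴ).trace).re = t := by
    have h := Matrix.trace_conjTranspose (G * (S (1,1))ᴴ)
    rw [Matrix.conjTranspose_mul, Matrix.conjTranspose_conjTranspose] at h
    rw [h]
    rw [show (star ((G * (S (1,1))ᴴ).trace)).re = ((G * (S (1,1))ᴴ).trace).re from
      Complex.conj_re _]
    exact htGS
  have hab2t : 0 ≤ a (0,0) + a (1,1) - 2*t := by nlinarith only [sq_nonneg (α - β), htαβ, hα2, hβ2]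
  set u' := Real.sqrt (a (0,0) + a (1,1) - 2*t) with hu'def
  have hu'2 : u'^2 = a (0,0) + a (1,1) - 2*t := Real.sq_sqrt hab2t
  have hu'0 : 0 ≤ u' := Real.sqrt_nonneg _
  have hfd1 : frobSq (S (1,1) - G) = a (0,0) + a (1,1) - 2*t := by
    rw [frobSq_sub, ha_frob, hfrobG, htSG]; ring
  have hfd2 : frobSq (S (0,0) - W * S (1,1)) = a (0,0) + a (1,1) - 2*t := by
    rw [frobSq_sub, frobSq_unitary_mul hW, ha_frob, ha_frob]
    have hx : ((S (0,0) * (W * S (1,1))ᴴ).trace).re = t := by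
      rw [Matrix.conjTranspose_mul, ← Matrix.mul_assoc, ← hXSS, Matrix.trace_mul_comm, hP_eq]
      exact htre
    rw [hx]
  -- the candidate pbit
  refine ⟨((t : ℂ))⁻¹ • P, ![W, 1], ?_, ?_, ?_, ?_⟩
  · rw [show ((t : ℂ))⁻¹ = (((t⁻¹ : ℝ)) : ℂ) by rw [Complex.ofReal_inv]]
    exact psd_smul hPpsd (inv_nonneg.mpr ht0.le)
  · rw [Matrix.trace_smul, htP, smul_eq_mul, inv_mul_cancel₀]
    exact_mod_cast ht0.ne'
  · intro i
    fin_cases i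
    · simpa using hW
    · simpa using one_mem (Matrix.unitaryGroup (Fin dA × Fin dB) ℂ)
  -- the trace norm bound
  set γ := pbit (((t : ℂ))⁻¹ • P) ![W, 1] with hγdef
  have hγz : ∀ p q : Fin 2 × Fin 2, ¬(p.1 = p.2 ∧ q.1 = q.2) → blk γ p q = 0 := by
    intro p q h
    rw [hγdef, blk_pbit, if_neg h]
  set c : ℂ := ((1 : ℂ)/2) * ((t : ℂ))⁻¹ with hcdef
  have hsmul_comb : ∀ (A B : Matrix (Fin dA × Fin dB) (Fin dA × Fin dB) ℂ),
      ((1 : ℂ)/2) • (A * (((t : ℂ))⁻¹ • P) * B) = c • (A * P * B) := by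
    intro A B
    rw [Matrix.mul_smul, Matrix.smul_mul, smul_smul, hcdef]
  have hγ00 : blk γ (0,0) (0,0) = c • (W * P * Wᴴ) := by
    rw [hγdef, blk_pbit, if_pos ⟨rfl, rfl⟩]
    simpa using hsmul_comb W Wᴴ
  have hγ01 : blk γ (0,0) (1,1) = c • X := by
    rw [hγdef, blk_pbit, if_pos ⟨rfl, rfl⟩]
    simp only [Matrix.cons_val_zero, Matrix.cons_val_one, Matrix.head_cons,
      Matrix.conjTranspose_one, Matrix.mul_one]
    rw [Matrix.mul_smul, smul_smul, ← hcdef, ← hXpolar]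
  have hγ10 : blk γ (1,1) (0,0) = c • Xᴴ := by
    rw [hγdef, blk_pbit, if_pos ⟨rfl, rfl⟩]
    simp only [Matrix.cons_val_zero, Matrix.cons_val_one, Matrix.head_cons, Matrix.one_mul]
    rw [Matrix.smul_mul, smul_smul, ← hcdef]
    congr 1
    rw [hXpolar, Matrix.conjTranspose_mul, hPpsd.1.eq]
  have hγ11 : blk γ (1,1) (1,1) = c • P := by
    rw [hγdef, blk_pbit, if_pos ⟨rfl, rfl⟩]
    simp only [Matrix.cons_val_one, Matrix.head_cons, Matrix.cons_val_zero, Matrix.conjTranspose_one,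
      Matrix.mul_one, Matrix.one_mul]
    rw [smul_smul, ← hcdef]
  -- norm of the scalar 1 - c
  have h1le : (1:ℝ) ≤ 1/(2*t) := by
    rw [le_div_iff₀ (by linarith : (0:ℝ) < 2*t)]
    linarith
  have hnc0 : 0 ≤ 1/(2*t) - 1 := by linarith
  have hnc : ‖(1:ℂ) - c‖ = 1/(2*t) - 1 := by
    have h1 : (1:ℂ) - c = (((1 - 1/(2*t) : ℝ)) : ℂ) := by
      rw [hcdef]
      push_cast
      ring
    rw [h1, Complex.norm_real, Real.norm_eq_abs,
      abs_of_nonpos (show (1 - 1/(2*t) : ℝ) ≤ 0 by linarith)]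
    ring
  have hhalfsub : (1/(2*t) - 1) * t = 1/2 - t := by
    field_simp
  -- the four corner bounds
  have hB0011 : traceNorm (blk σ ((0 : Fin 2), (0 : Fin 2)) ((1 : Fin 2), (1 : Fin 2))
      - blk γ ((0 : Fin 2), (0 : Fin 2)) ((1 : Fin 2), (1 : Fin 2))) ≤ 1/2 - t := by
    rw [hγ01, ← hXdef, show X - c • X = ((1:ℂ) - c) • X by rw [sub_smul, one_smul],
      traceNorm_smul, hnc, ← htdef]
    exact le_of_eq hhalfsub
  have hB1100 : traceNorm (blk σ ((1 : Fin 2), (1 : Fin 2)) ((0 : Fin 2), (0 : Fin 2))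
      - blk γ ((1 : Fin 2), (1 : Fin 2)) ((0 : Fin 2), (0 : Fin 2))) ≤ 1/2 - t := by
    have hXT : blk σ ((1 : Fin 2), (1 : Fin 2)) ((0 : Fin 2), (0 : Fin 2)) = Xᴴ := by
      rw [hblkS, hXSS, Matrix.conjTranspose_mul, Matrix.conjTranspose_conjTranspose]
    rw [hXT, hγ10, show Xᴴ - c • Xᴴ = ((1:ℂ) - c) • Xᴴ by rw [sub_smul, one_smul],
      traceNorm_smul, traceNorm_conjTranspose, hnc, ← htdef]
    exact le_of_eq hhalfsub
  have hB0000 : traceNorm (blk σ ((0 : Fin 2), (0 : Fin 2)) ((0 : Fin 2), (0 : Fin 2))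
      - blk γ ((0 : Fin 2), (0 : Fin 2)) ((0 : Fin 2), (0 : Fin 2)))
      ≤ α * u' + (1/(2*t) - 1) * (α * β) := by
    rw [hγ00]
    have hWPW : W * P * Wᴴ = S (0,0) * (W * S (1,1))ᴴ := by
      rw [← hP_eq, ← Matrix.mul_assoc W Wᴴ X, hWWr, one_mul, hXSS, Matrix.mul_assoc,
        ← Matrix.conjTranspose_mul]
    rw [hblkS ((0 : Fin 2), (0 : Fin 2)) ((0 : Fin 2), (0 : Fin 2)), hWPW]
    have hid : S (0,0) * (S (0,0))ᴴ - c • (S (0,0) * (W * S (1,1))ᴴ)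
        = S (0,0) * (S (0,0) - W * S (1,1))ᴴ + ((1:ℂ) - c) • (S (0,0) * (W * S (1,1))ᴴ) := by
      rw [Matrix.conjTranspose_sub, Matrix.mul_sub, sub_smul, one_smul]
      abel
    rw [hid]
    have h1 : traceNorm (S (0,0) * (S (0,0) - W * S (1,1))ᴴ) ≤ α * u' := by
      calc traceNorm (S (0,0) * (S (0,0) - W * S (1,1))ᴴ)
          ≤ Real.sqrt (frobSq (S (0,0))) * Real.sqrt (frobSq (S (0,0) - W * S (1,1))) :=
            traceNorm_mul_conjTranspose_le _ _
        _ = α * u' := by rw [ha_frob, hfd2, hαdef, hu'def]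
    have h2 : traceNorm (((1:ℂ) - c) • (S (0,0) * (W * S (1,1))ᴴ))
        ≤ (1/(2*t) - 1) * (α * β) := by
      rw [traceNorm_smul, hnc]
      refine mul_le_mul_of_nonneg_left ?_ hnc0
      calc traceNorm (S (0,0) * (W * S (1,1))ᴴ)
          ≤ Real.sqrt (frobSq (S (0,0))) * Real.sqrt (frobSq (W * S (1,1))) :=
            traceNorm_mul_conjTranspose_le _ _
        _ = α * β := by rw [frobSq_unitary_mul hW, ha_frob, ha_frob, hαdef, hβdef]
    exact le_trans (traceNorm_triangle _ _) (add_le_add h1 h2)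
  have hB1111 : traceNorm (blk σ ((1 : Fin 2), (1 : Fin 2)) ((1 : Fin 2), (1 : Fin 2))
      - blk γ ((1 : Fin 2), (1 : Fin 2)) ((1 : Fin 2), (1 : Fin 2)))
      ≤ β * u' + (1/(2*t) - 1) * (α * β) := by
    rw [hγ11, hblkS ((1 : Fin 2), (1 : Fin 2)) ((1 : Fin 2), (1 : Fin 2))]
    conv_lhs => rw [hPGS]
    have hid : S (1,1) * (S (1,1))ᴴ - c • (G * (S (1,1))ᴴ)
        = (S (1,1) - G) * (S (1,1))ᴴ + ((1:ℂ) - c) • (G * (S (1,1))ᴴ) := by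
      rw [Matrix.sub_mul, sub_smul, one_smul]
      abel
    rw [hid]
    have h1 : traceNorm ((S (1,1) - G) * (S (1,1))ᴴ) ≤ β * u' := by
      calc traceNorm ((S (1,1) - G) * (S (1,1))ᴴ)
          ≤ Real.sqrt (frobSq (S (1,1) - G)) * Real.sqrt (frobSq (S (1,1))) :=
            traceNorm_mul_conjTranspose_le _ _
        _ = β * u' := by rw [ha_frob, hfd1, hβdef, hu'def]; ring
    have h2 : traceNorm (((1:ℂ) - c) • (G * (S (1,1))ᴴ))
        ≤ (1/(2*t) - 1) * (α * β) := by
      rw [traceNorm_smul, hnc]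
      refine mul_le_mul_of_nonneg_left ?_ hnc0
      calc traceNorm (G * (S (1,1))ᴴ)
          ≤ Real.sqrt (frobSq G) * Real.sqrt (frobSq (S (1,1))) :=
            traceNorm_mul_conjTranspose_le _ _
        _ = α * β := by rw [hfrobG, ha_frob, hαdef, hβdef]
    exact le_trans (traceNorm_triangle _ _) (add_le_add h1 h2)
  -- coherence blocks
  have hcoh : ∀ p q : Fin 2 × Fin 2, ¬(p.1 = p.2 ∧ q.1 = q.2) →
      traceNorm (blk σ p q - blk γ p q) ≤ Real.sqrt (a p) * Real.sqrt (a q) := by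
    intro p q h
    rw [hγz p q h, sub_zero, hblkS]
    calc traceNorm (S p * (S q)ᴴ)
        ≤ Real.sqrt (frobSq (S p)) * Real.sqrt (frobSq (S q)) :=
          traceNorm_mul_conjTranspose_le _ _
      _ = Real.sqrt (a p) * Real.sqrt (a q) := by rw [ha_frob, ha_frob]
  -- numeric abbreviations
  set u := Real.sqrt (2*ε) with hudef
  have hu2 : u^2 = 2*ε := Real.sq_sqrt (by linarith)
  have hu0 : 0 ≤ u := Real.sqrt_nonneg _
  have huhalf : u ≤ 1/2 := by nlinarith only [hu2, hu0, hε1]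
  set v := Real.sqrt u with hvdef
  have hv2 : v^2 = u := Real.sq_sqrt hu0
  have hv0 : 0 ≤ v := Real.sqrt_nonneg _
  have hv34 : v ≤ 3/4 := by nlinarith only [hv2, hv0, huhalf]
  have hH0 : 0 ≤ binEnt (2*u) := binEnt_nonneg (by linarith) (by linarith)
  set Q := Real.sqrt (8*u + binEnt (2*u)) with hQdef
  have hQ0 : 0 ≤ Q := Real.sqrt_nonneg _
  have hQ2 : Q^2 = 8*u + binEnt (2*u) := Real.sq_sqrt (by linarith)
  have hQv : 2.8 * v ≤ Q := by nlinarith only [hQ2, hv2, hH0, hQ0, hv0, sq_nonneg v]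
  -- sum splitting
  have hsplit : traceNorm (σ - γ) ≤ ∑ p : Fin 2 × Fin 2, ∑ q : Fin 2 × Fin 2,
      traceNorm (blk σ p q - blk γ p q) := by
    conv_lhs => rw [blk_decomp (σ - γ)]
    refine le_trans (traceNorm_sum_le _ _) (Finset.sum_le_sum fun p _ => ?_)
    refine le_trans (traceNorm_sum_le _ _) (Finset.sum_le_sum fun q _ => ?_)
    rw [blk_sub, traceNorm_kron_stdBasis]
  rw [sum_prod_expand (fun p q => traceNorm (blk σ p q - blk γ p q))] at hsplit
  -- auxiliary inequalities
  have hu'u : u' ≤ u := by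
    rw [hu'def, hudef]
    refine Real.sqrt_le_sqrt ?_
    have := ha_nonneg ((0 : Fin 2), (1 : Fin 2))
    have := ha_nonneg ((1 : Fin 2), (0 : Fin 2))
    linarith [hsum_a, hblk]
  have hαβ32 : α + β ≤ 3/2 := by
    nlinarith only [hsq_sum, sq_nonneg (α - β), sq_nonneg g, sq_nonneg d, hα0, hβ0]
  have hαβ2t : 2*t ≤ α^2 + β^2 := by nlinarith only [sq_nonneg (α - β), htαβ]
  have hgd : g + d ≤ (3/2) * u := by
    nlinarith only [hsq_sum, hαβ2t, hblk, hu2, hg0, hd0, hu0, sq_nonneg (g - d)]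
  have hp1 : (α + β) * u' ≤ (3/2) * u :=
    mul_le_mul hαβ32 hu'u hu'0 (by norm_num)
  have hp2 : (α + β) * (g + d) ≤ (3/2) * ((3/2) * u) :=
    mul_le_mul hαβ32 hgd (by linarith) (by norm_num)
  have hp3 : (g + d)^2 ≤ 2 * u^2 := by
    nlinarith only [hsq_sum, hαβ2t, hblk, hu2, sq_nonneg (g - d), hg0, hd0]
  have hrterm : (1/(2*t) - 1) * (α * β) ≤ (4/3) * ε := by
    have h2t : (0:ℝ) < 2*t := by linarith
    have heq : 1/(2*t) - 1 = (1 - 2*t)/(2*t) := by field_simp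
    rw [heq, div_mul_eq_mul_div, div_le_iff₀ h2t]
    have hαβhalf : α*β ≤ 1/2 := by
      nlinarith only [sq_nonneg (α - β), hsq_sum, sq_nonneg g, sq_nonneg d]
    have m1 := mul_nonneg (by linarith : (0:ℝ) ≤ 1 - 2*t)
      (by linarith : (0:ℝ) ≤ 1/2 - α*β)
    have m2 := mul_nonneg hε0.le (by linarith : (0:ℝ) ≤ 2*t - 3/4)
    nlinarith only [m1, m2, hblk]
  -- assemble
  refine le_trans hsplit ?_
  have c1 := hcoh ((0 : Fin 2), (0 : Fin 2)) ((0 : Fin 2), (1 : Fin 2)) (by decide)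
  have c2 := hcoh ((0 : Fin 2), (0 : Fin 2)) ((1 : Fin 2), (0 : Fin 2)) (by decide)
  have c3 := hcoh ((0 : Fin 2), (1 : Fin 2)) ((0 : Fin 2), (0 : Fin 2)) (by decide)
  have c4 := hcoh ((0 : Fin 2), (1 : Fin 2)) ((0 : Fin 2), (1 : Fin 2)) (by decide)
  have c5 := hcoh ((0 : Fin 2), (1 : Fin 2)) ((1 : Fin 2), (0 : Fin 2)) (by decide)
  have c6 := hcoh ((0 : Fin 2), (1 : Fin 2)) ((1 : Fin 2), (1 : Fin 2)) (by decide)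
  have c7 := hcoh ((1 : Fin 2), (0 : Fin 2)) ((0 : Fin 2), (0 : Fin 2)) (by decide)
  have c8 := hcoh ((1 : Fin 2), (0 : Fin 2)) ((0 : Fin 2), (1 : Fin 2)) (by decide)
  have c9 := hcoh ((1 : Fin 2), (0 : Fin 2)) ((1 : Fin 2), (0 : Fin 2)) (by decide)
  have c10 := hcoh ((1 : Fin 2), (0 : Fin 2)) ((1 : Fin 2), (1 : Fin 2)) (by decide)
  have c11 := hcoh ((1 : Fin 2), (1 : Fin 2)) ((0 : Fin 2), (1 : Fin 2)) (by decide)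
  have c12 := hcoh ((1 : Fin 2), (1 : Fin 2)) ((1 : Fin 2), (0 : Fin 2)) (by decide)
  rw [← hαdef, ← hgdef] at c1
  rw [← hαdef, ← hddef] at c2
  rw [← hgdef, ← hαdef] at c3
  rw [← hgdef] at c4
  rw [← hgdef, ← hddef] at c5
  rw [← hgdef, ← hβdef] at c6
  rw [← hddef, ← hαdef] at c7
  rw [← hddef, ← hgdef] at c8
  rw [← hddef] at c9
  rw [← hddef, ← hβdef] at c10
  rw [← hβdef, ← hgdef] at c11
  rw [← hβdef, ← hddef] at c12
  have hu2v : u^2 = v^2 * v^2 := by rw [hv2]; ring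
  have s3 : 4*(v^2) + (13/3)*((v^2)*(v^2)) ≤ 5.6*v := by
    nlinarith only [hv0, hv34, sq_nonneg v, mul_nonneg hv0 hv0,
      mul_nonneg (mul_nonneg hv0 hv0) hv0]
  have hfinal : α * u' + (1/(2*t) - 1) * (α * β) + (1/2 - t) + (1/2 - t)
      + (β * u' + (1/(2*t) - 1) * (α * β))
      + (α*g + α*d + g*α + g*g + g*d + g*β + d*α + d*g + d*d + d*β + β*g + β*d)
      ≤ 2*Q + 2*u := by
    linarith only [hp1, hp2, hp3, hrterm, hblk, hu2, hv2, hu2v, s3, hQv]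
  linarith only [hB0000, hB0011, hB1100, hB1111, c1, c2, c3, c4, c5, c6, c7, c8, c9, c10,
    c11, c12, hfinal]
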